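/- arXiv:1409.0951 — 3 statements merged into one kernel-verified Lean document; each statement's English description precedes it below -/
import Mathlib

section
/- For every lattice L ⊂ ℂ and every z with 0 < |z| < min{|u| : u ∈ L, u ≠ 0}, the Weierstrass ℘-function has the Laurent expansion ℘_L(z) = 1/z² + Σ_{n=1}^∞ (2n+1) E_{2n+2}(L) z^{2n}, the series converging absolutely. -/
noncomputable section

/-- The set of points of the lattice `ℤω₁ + ℤω₂` in `ℂ`. -/
def latticePts (ω₁ ω₂ : ℂ) : Set ℂ := {z | ∃ m n : ℤ, z = m * ω₁ + n * ω₂}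

/-- The Weierstrass ℘-function of the lattice `ℤω₁ + ℤω₂`. -/
def wp (ω₁ ω₂ : ℂ) (z : ℂ) : ℂ :=
  1 / z ^ 2 + ∑' u : {u : ℂ // u ∈ latticePts ω₁ ω₂ ∧ u ≠ 0},
    (1 / (z - (u : ℂ)) ^ 2 - 1 / (u : ℂ) ^ 2)

/-- The Eisenstein series `E_{2k}(L) = Σ_{u ∈ L \ {0}} u^{-2k}` of the lattice
`ℤω₁ + ℤω₂`. -/
def eisen (ω₁ ω₂ : ℂ) (k : ℕ) : ℂ :=
  ∑' u : {u : ℂ // u ∈ latticePts ω₁ ω₂ ∧ u ≠ 0}, 1 / (u : ℂ) ^ (2 * k)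

/-! The function `℘_L(z) - 1/z²` is Mathlib's `PeriodPair.weierstrassPExcept L 0`, whose power
series at `0` is `Σ_{i ≥ 1} (i + 1) G_{i+2}(L) zⁱ` on the ball missing `L ∖ {0}`: each term
`1/(z - u)² - 1/u²` is expanded as a geometric-type series in `z/u` and the double sum is
interchanged. The odd sums `G_{2k+1}(L)` vanish by the symmetry `u ↦ -u`, which leaves the even
powers. Absolute convergence comes for free: in the finite-dimensional space `ℂ`, summability
already implies absolute summability. -/

lemma hasSum_comp_two_mul_add_two {M : Type*} [AddCommMonoid M] [TopologicalSpace M]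
    {f : ℕ → M} {s : M} (hf : HasSum f s) (h_zero : f 0 = 0) (h_odd : ∀ n, Odd n → f n = 0) :
    HasSum (fun m => f (2 * m + 2)) s := by
  refine (Function.Injective.hasSum_iff (g := fun m => 2 * m + 2)
    (fun a b h => by simp only at h; omega) fun n hn => ?_).mpr hf
  obtain ⟨k, rfl⟩ | h := Nat.even_or_odd n
  · obtain _ | k := k
    · exact h_zero
    · exact absurd ⟨k, by ring⟩ hn
  · exact h_odd n h

namespace PeriodPair

variable (L : PeriodPair)

-- The `l = 0` term of `sumInvPow 0 (i + 2)` is `0⁻¹ = 0`, so it is the Eisenstein sum `G (i + 2)`.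
lemma coeff_weierstrassPExceptSeries_zero_zero (i : ℕ) :
    (L.weierstrassPExceptSeries 0 0).coeff i = if i = 0 then 0 else (i + 1) * L.G (i + 2) := by
  simp [weierstrassPExceptSeries]

lemma hasSum_weierstrassPExcept_zero {z : ℂ} (hz : ∀ l : L.lattice, l.1 ≠ 0 → ‖z‖ < ‖l.1‖) :
    HasSum (fun m : ℕ => (2 * m + 3) * L.G (2 * m + 4) * z ^ (2 * m + 2))
      (L.weierstrassPExcept 0 z) := by
  have h := L.weierstrassPExceptSeries_hasSum 0 z 0 (by simpa using hz)
  simp only [coeff_weierstrassPExceptSeries_zero_zero, sub_zero] at h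
  refine (hasSum_comp_two_mul_add_two h (by simp) fun n hn => ?_).congr_fun fun m => ?_
  · simp [L.G_eq_zero_of_odd (n + 2) (by simpa [Nat.odd_add_one, parity_simps] using hn)]
  · rw [if_neg (by omega), show 2 * m + 2 + 2 = 2 * m + 4 by ring]
    push_cast
    ring

lemma latticePts_eq_lattice : latticePts L.ω₁ L.ω₂ = L.lattice := by
  ext x
  simp [latticePts, mem_lattice, eq_comm]

lemma tsum_latticePts_ne_zero (f : ℂ → ℂ) :
    ∑' u : {u : ℂ // u ∈ latticePts L.ω₁ L.ω₂ ∧ u ≠ 0}, f u =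
      ∑' l : L.lattice, if l.1 = 0 then 0 else f l := by
  refine (tsum_subtype {u | u ∈ latticePts L.ω₁ L.ω₂ ∧ u ≠ 0} f).trans ?_
  refine .trans ?_ (tsum_subtype (L.lattice : Set ℂ) fun u => if u = 0 then 0 else f u).symm
  rw [latticePts_eq_lattice]
  congr with u
  classical
  by_cases hu : u = 0 <;> simp [Set.indicator_apply, hu]

lemma wp_sub_one_div_sq (z : ℂ) : wp L.ω₁ L.ω₂ z - 1 / z ^ 2 = L.weierstrassPExcept 0 z := by
  rw [wp, add_sub_cancel_left]
  exact L.tsum_latticePts_ne_zero fun u => 1 / (z - u) ^ 2 - 1 / u ^ 2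

lemma eisen_eq_G {k : ℕ} (hk : k ≠ 0) : eisen L.ω₁ L.ω₂ k = L.G (2 * k) := by
  refine (L.tsum_latticePts_ne_zero fun u => 1 / u ^ (2 * k)).trans (tsum_congr fun l => ?_)
  split_ifs with hl
  · simp [hl, hk]
  · rw [one_div]

end PeriodPair

theorem weierstrassP_laurent_expansion_general (ω₁ ω₂ : ℂ)
    (hL : LinearIndependent ℝ ![ω₁, ω₂]) (z : ℂ)
    (hzu : ∀ u ∈ latticePts ω₁ ω₂, u ≠ 0 → ‖z‖ < ‖u‖) :
    HasSum (fun n : ℕ =>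
        (2 * ((n : ℂ) + 1) + 1) * eisen ω₁ ω₂ (n + 2) * z ^ (2 * (n + 1)))
      (wp ω₁ ω₂ z - 1 / z ^ 2) ∧
    Summable (fun n : ℕ =>
      ‖(2 * ((n : ℂ) + 1) + 1) * eisen ω₁ ω₂ (n + 2) * z ^ (2 * (n + 1))‖) := by
  let L : PeriodPair := ⟨ω₁, ω₂, hL⟩
  have hz : ∀ l : L.lattice, l.1 ≠ 0 → ‖z‖ < ‖l.1‖ :=
    fun l => hzu l (L.latticePts_eq_lattice ▸ l.2)
  have h : HasSum (fun n : ℕ => (2 * ((n : ℂ) + 1) + 1) * eisen ω₁ ω₂ (n + 2) * z ^ (2 * (n + 1)))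
      (wp ω₁ ω₂ z - 1 / z ^ 2) := by
    refine (L.wp_sub_one_div_sq z ▸ L.hasSum_weierstrassPExcept_zero hz).congr_fun fun n => ?_
    rw [show eisen ω₁ ω₂ (n + 2) = L.G (2 * (n + 2)) from L.eisen_eq_G (by omega)]
    ring_nf
  exact ⟨h, summable_norm_iff.mpr h.summable⟩

/-- For every lattice `L ⊂ ℂ` and every `z` with `0 < |z| < min{|u| : u ∈ L, u ≠ 0}`,
the Weierstrass ℘-function has the Laurent expansion
`℘_L(z) = 1/z² + Σ_{n=1}^∞ (2n+1) E_{2n+2}(L) z^{2n}`, converging absolutely. -/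
theorem weierstrassP_laurent_expansion (ω₁ ω₂ : ℂ)
    (hL : LinearIndependent ℝ ![ω₁, ω₂]) (z : ℂ) (hz : 0 < ‖z‖)
    (hzu : ∀ u ∈ latticePts ω₁ ω₂, u ≠ 0 → ‖z‖ < ‖u‖) :
    HasSum (fun n : ℕ =>
        (2 * ((n : ℂ) + 1) + 1) * eisen ω₁ ω₂ (n + 2) * z ^ (2 * (n + 1)))
      (wp ω₁ ω₂ z - 1 / z ^ 2) ∧
    Summable (fun n : ℕ =>
      ‖(2 * ((n : ℂ) + 1) + 1) * eisen ω₁ ω₂ (n + 2) * z ^ (2 * (n + 1))‖) :=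
  weierstrassP_laurent_expansion_general ω₁ ω₂ hL z hzu
end
end

section
/- For every positive integer n, σ₇(n) = σ₃(n) + 120 Σ_{i=1}^{n−1} σ₃(i) σ₃(n−i). -/
/-!
Let `S(n)` be the set of `((a, x), (b, y))` in positive integers with `a x + b y = n`, so that
`Σ_{i<n} σ₃(i) σ₃(n-i) = Σ_{S(n)} a³b³`. Put `h(a, b) = (ab(a-b))²`. The map
`((a, x), (b, y)) ↦ ((b, y - x), (a + b, x))` is a bijection from the part `x < y` of `S(n)`
onto the part `a < b`, and `h(b, a + b) = h(a, b) + 4a³b³`. Folding `Σ_{S(n)} h` by the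
symmetry `(a, x) ↔ (b, y)` in two ways, along `x = y` and along `a = b` (where `h` vanishes),
gives `Σ_{x=y} h = 8 Σ_{x<y} a³b³`, hence `4 Σ_{S(n)} a³b³ = Σ_{x=y} (ab(a+b))²`. On `x = y`
the constraint reads `x (a + b) = n`, and `30 Σ_{a+b=e} a²b² = e⁵ - e` turns the right side
into `(σ₇(n) - σ₃(n)) / 30`.
-/

def sigmaFn (k n : ℕ) : ℕ := ∑ d ∈ n.divisors, d ^ k

open Finset

theorem Finset.sum_filter_lt_add_sum_filter_eq_add_sum_filter_gt {ι α M : Type*}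
    [LinearOrder α] [AddCommMonoid M] (s : Finset ι) (u v : ι → α) (f : ι → M) :
    ∑ i ∈ s with u i < v i, f i + ∑ i ∈ s with u i = v i, f i
      + ∑ i ∈ s with v i < u i, f i = ∑ i ∈ s, f i := by
  rw [← sum_filter_add_sum_filter_not s (fun i => u i < v i),
    ← sum_filter_add_sum_filter_not (s.filter fun i => ¬ u i < v i) (fun i => u i = v i),
    filter_filter, filter_filter, add_assoc]
  congr 3 <;> ext i <;> simp only [mem_filter] <;> grind

-- `m` is kept independent of `e` so that the identity goes through by induction on `e`.
theorem sum_range_sq_mul_sub_sq {R : Type*} [CommRing R] (m : R) (e : ℕ) :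
    30 * ∑ a ∈ range e, (a : R) ^ 2 * (m - a) ^ 2 =
      5 * m ^ 2 * (2 * e ^ 3 - 3 * e ^ 2 + e) - 15 * m * (e ^ 4 - 2 * e ^ 3 + e ^ 2)
        + (6 * e ^ 5 - 15 * e ^ 4 + 10 * e ^ 3 - e) := by
  induction e with
  | zero => simp
  | succ e ih => rw [sum_range_succ, mul_add, ih]; push_cast; ring

theorem sum_Ico_sq_mul_sub_sq {R : Type*} [CommRing R] (e : ℕ) :
    30 * ∑ a ∈ Ico 1 e, (a : R) ^ 2 * (e - a) ^ 2 = (e : R) ^ 5 - e := by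
  rcases e.eq_zero_or_pos with rfl | he
  · simp
  have := sum_range_sq_mul_sub_sq (e : R) e
  rw [sum_range_eq_add_Ico _ he] at this
  linear_combination this

def twoProductReps (n : ℕ) : Finset ((ℕ × ℕ) × (ℕ × ℕ)) :=
  {p ∈ (Icc 1 n ×ˢ Icc 1 n) ×ˢ (Icc 1 n ×ˢ Icc 1 n) | p.1.1 * p.1.2 + p.2.1 * p.2.2 = n}

@[simp]
theorem mem_twoProductReps {n a x b y : ℕ} :
    ((a, x), (b, y)) ∈ twoProductReps n ↔
      a * x + b * y = n ∧ 0 < a ∧ 0 < x ∧ 0 < b ∧ 0 < y := by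
  simp only [twoProductReps, mem_filter, mem_product, mem_Icc]
  constructor
  · rintro ⟨⟨⟨⟨ha, -⟩, hx, -⟩, ⟨hb, -⟩, hy, -⟩, h⟩
    exact ⟨h, ha, hx, hb, hy⟩
  · rintro ⟨h, ha, hx, hb, hy⟩
    have : a ≤ a * x ∧ x ≤ a * x ∧ b ≤ b * y ∧ y ≤ b * y :=
      ⟨Nat.le_mul_of_pos_right a hx, Nat.le_mul_of_pos_left x ha,
        Nat.le_mul_of_pos_right b hy, Nat.le_mul_of_pos_left y hb⟩
    omega

namespace twoProductReps

theorem swap_mem {n : ℕ} {p : (ℕ × ℕ) × (ℕ × ℕ)} (hp : p ∈ twoProductReps n) :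
    p.swap ∈ twoProductReps n := by
  obtain ⟨⟨a, x⟩, b, y⟩ := p
  rw [mem_twoProductReps] at hp
  rw [Prod.swap_prod_mk, mem_twoProductReps]
  omega

variable {M : Type*} [AddCommMonoid M]

theorem sum_filter_swap (n : ℕ) (P : (ℕ × ℕ) × (ℕ × ℕ) → Prop) [DecidablePred P]
    (g : (ℕ × ℕ) × (ℕ × ℕ) → M) :
    ∑ p ∈ twoProductReps n with P p, g p
      = ∑ p ∈ twoProductReps n with P p.swap, g p.swap := by
  refine sum_nbij' Prod.swap Prod.swap ?_ ?_ (fun _ _ => rfl) (fun _ _ => rfl) (fun _ _ => rfl)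
  all_goals
    intro p hp
    simp only [mem_filter, Prod.swap_swap] at hp ⊢
    exact ⟨swap_mem hp.1, hp.2⟩

theorem sum_eq_two_nsmul_sum_filter_lt_add_sum_filter_eq (n : ℕ) (c : ℕ × ℕ → ℕ)
    (g : (ℕ × ℕ) × (ℕ × ℕ) → M) (hg : ∀ p, g p.swap = g p) :
    ∑ p ∈ twoProductReps n, g p = 2 • ∑ p ∈ twoProductReps n with c p.1 < c p.2, g p
      + ∑ p ∈ twoProductReps n with c p.1 = c p.2, g p := by
  rw [← sum_filter_lt_add_sum_filter_eq_add_sum_filter_gt _ (fun p => c p.1) (fun p => c p.2),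
    sum_filter_swap n (fun p => c p.2 < c p.1)]
  simp only [Prod.fst_swap, Prod.snd_swap, hg]
  abel

theorem sum_filter_lt_shift (n : ℕ) (f : ℕ → ℕ → M) :
    ∑ p ∈ twoProductReps n with p.1.2 < p.2.2, f p.2.1 (p.1.1 + p.2.1)
      = ∑ p ∈ twoProductReps n with p.1.1 < p.2.1, f p.1.1 p.2.1 := by
  refine sum_nbij' (fun p => ((p.2.1, p.2.2 - p.1.2), (p.1.1 + p.2.1, p.1.2)))
    (fun p => ((p.2.1 - p.1.1, p.2.2), (p.1.1, p.1.2 + p.2.2))) ?_ ?_ ?_ ?_ (fun _ _ => rfl)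
  · rintro ⟨⟨a, x⟩, b, y⟩ hp
    simp only [mem_filter, mem_twoProductReps] at hp ⊢
    obtain ⟨⟨h, ha, hx, hb, hy⟩, hxy⟩ := hp
    have : b * x ≤ b * y := Nat.mul_le_mul_left b hxy.le
    refine ⟨⟨?_, hb, by omega, by omega, hx⟩, by omega⟩
    rw [Nat.mul_sub, add_mul]
    omega
  · rintro ⟨⟨a, x⟩, b, y⟩ hp
    simp only [mem_filter, mem_twoProductReps] at hp ⊢
    obtain ⟨⟨h, ha, hx, hb, hy⟩, hab⟩ := hp
    have : a * y ≤ b * y := Nat.mul_le_mul_right y hab.le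
    refine ⟨⟨?_, by omega, hy, ha, by omega⟩, by omega⟩
    rw [Nat.sub_mul, mul_add]
    omega
  · rintro ⟨⟨a, x⟩, b, y⟩ hp
    simp only [mem_filter, mem_twoProductReps] at hp
    simp only [Prod.mk.injEq, and_true, true_and]
    omega
  · rintro ⟨⟨a, x⟩, b, y⟩ hp
    simp only [mem_filter, mem_twoProductReps] at hp
    simp only [Prod.mk.injEq, and_true, true_and]
    omega

theorem sum_filter_eq_eq_sum_divisorsAntidiagonal (n : ℕ) (f : ℕ → ℕ → M) :
    ∑ p ∈ twoProductReps n with p.1.2 = p.2.2, f p.1.1 p.2.1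
      = ∑ q ∈ n.divisorsAntidiagonal, ∑ a ∈ Ico 1 q.2, f a (q.2 - a) := by
  rw [sum_sigma']
  refine sum_nbij' (fun p => ⟨(p.1.2, p.1.1 + p.2.1), p.1.1⟩)
    (fun z => ((z.2, z.1.1), (z.1.2 - z.2, z.1.1))) ?_ ?_ ?_ ?_ ?_
  · rintro ⟨⟨a, x⟩, b, y⟩ hp
    simp only [mem_filter, mem_twoProductReps] at hp
    obtain ⟨⟨h, ha, hx, hb, hy⟩, rfl⟩ := hp
    simp only [mem_sigma, Nat.mem_divisorsAntidiagonal, mem_Ico]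
    refine ⟨⟨by rw [← h]; ring, by rw [← h]; positivity⟩, ha, by omega⟩
  · rintro ⟨⟨x, e⟩, a⟩ hz
    simp only [mem_sigma, Nat.mem_divisorsAntidiagonal, mem_Ico] at hz
    obtain ⟨⟨h, hn⟩, ha, hae⟩ := hz
    have hx : 0 < x := Nat.pos_of_ne_zero (by rintro rfl; omega)
    simp only [mem_filter, mem_twoProductReps, and_true]
    refine ⟨?_, ha, hx, by omega, hx⟩
    rw [← add_mul, Nat.add_sub_cancel' hae.le, mul_comm, h]
  · rintro ⟨⟨a, x⟩, b, y⟩ hp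
    simp only [mem_filter, mem_twoProductReps] at hp
    simp only [Prod.mk.injEq, true_and]
    omega
  · rintro ⟨⟨x, e⟩, a⟩ hz
    simp only [mem_sigma, Nat.mem_divisorsAntidiagonal, mem_Ico] at hz
    simp only [Sigma.mk.injEq, Prod.mk.injEq, true_and, heq_eq_eq, and_true]
    omega
  · rintro ⟨⟨a, x⟩, b, y⟩ -
    simp

end twoProductReps

theorem sum_sigmaFn_mul_sigmaFn_eq_sum_twoProductReps (k n : ℕ) :
    ∑ i ∈ Ico 1 n, sigmaFn k i * sigmaFn k (n - i)
      = ∑ p ∈ twoProductReps n, p.1.1 ^ k * p.2.1 ^ k := by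
  have hmaps : ∀ p ∈ twoProductReps n, p.1.1 * p.1.2 ∈ Ico 1 n := by
    rintro ⟨⟨a, x⟩, b, y⟩ hp
    rw [mem_twoProductReps] at hp
    have := Nat.mul_pos hp.2.1 hp.2.2.1
    have := Nat.mul_pos hp.2.2.2.1 hp.2.2.2.2
    simp only [mem_Ico]
    omega
  rw [← sum_fiberwise_of_maps_to hmaps]
  refine sum_congr rfl fun i hi => ?_
  rw [mem_Ico] at hi
  have hfiber : {p ∈ twoProductReps n | p.1.1 * p.1.2 = i}
      = i.divisorsAntidiagonal ×ˢ (n - i).divisorsAntidiagonal := by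
    ext ⟨⟨a, x⟩, b, y⟩
    simp only [mem_filter, mem_twoProductReps, mem_product, Nat.mem_divisorsAntidiagonal]
    constructor
    · rintro ⟨⟨h, ha, hx, -⟩, rfl⟩
      have := Nat.mul_pos ha hx
      omega
    · rintro ⟨⟨rfl, hax⟩, hby, hn⟩
      obtain ⟨ha, hx⟩ := mul_ne_zero_iff.1 hax
      obtain ⟨hb, hy⟩ := mul_ne_zero_iff.1 (hby ▸ hn)
      omega
  simp only [sigmaFn, ← Nat.sum_divisorsAntidiagonal (fun a _ => a ^ k), sum_mul_sum, hfiber,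
    sum_product]

theorem four_mul_sum_cube_eq_sum_filter_eq (n : ℕ) :
    4 * ∑ p ∈ twoProductReps n, ((p.1.1 : ℤ) * p.2.1) ^ 3
      = ∑ p ∈ twoProductReps n with p.1.2 = p.2.2,
          ((p.1.1 : ℤ) * p.2.1 * (p.1.1 + p.2.1)) ^ 2 := by
  have hsym (c : ℕ × ℕ → ℕ) (w : ℕ → ℕ → ℤ) (hw : ∀ a b, w a b = w b a) :=
    twoProductReps.sum_eq_two_nsmul_sum_filter_lt_add_sum_filter_eq n c (fun p => w p.1.1 p.2.1)
      fun p => hw _ _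
  have hH_xy := hsym Prod.snd (fun a b => ((a : ℤ) * b * (a - b)) ^ 2) fun _ _ => by ring
  have hH_ab := hsym Prod.fst (fun a b => ((a : ℤ) * b * (a - b)) ^ 2) fun _ _ => by ring
  have hG_xy := hsym Prod.snd (fun a b => ((a : ℤ) * b) ^ 3) fun _ _ => by ring
  have hH_diag : ∑ p ∈ twoProductReps n with p.1.1 = p.2.1,
      ((p.1.1 : ℤ) * p.2.1 * (p.1.1 - p.2.1)) ^ 2 = 0 :=
    sum_eq_zero fun p hp => by simp [(mem_filter.1 hp).2]
  have hshift : ∑ p ∈ twoProductReps n with p.1.1 < p.2.1,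
        ((p.1.1 : ℤ) * p.2.1 * (p.1.1 - p.2.1)) ^ 2
      = ∑ p ∈ twoProductReps n with p.1.2 < p.2.2, ((p.1.1 : ℤ) * p.2.1 * (p.1.1 - p.2.1)) ^ 2
        + 4 * ∑ p ∈ twoProductReps n with p.1.2 < p.2.2, ((p.1.1 : ℤ) * p.2.1) ^ 3 := by
    rw [← twoProductReps.sum_filter_lt_shift n (fun a b => ((a : ℤ) * b * (a - b)) ^ 2),
      mul_sum, ← sum_add_distrib]
    exact sum_congr rfl fun p _ => by push_cast; ring
  have hsplit : ∑ p ∈ twoProductReps n with p.1.2 = p.2.2,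
        ((p.1.1 : ℤ) * p.2.1 * (p.1.1 + p.2.1)) ^ 2
      = ∑ p ∈ twoProductReps n with p.1.2 = p.2.2, ((p.1.1 : ℤ) * p.2.1 * (p.1.1 - p.2.1)) ^ 2
        + 4 * ∑ p ∈ twoProductReps n with p.1.2 = p.2.2, ((p.1.1 : ℤ) * p.2.1) ^ 3 := by
    rw [mul_sum, ← sum_add_distrib]
    exact sum_congr rfl fun p _ => by ring
  simp only [two_nsmul, hH_diag] at hH_xy hH_ab hG_xy
  linear_combination 4 * hG_xy - hsplit + hH_xy - hH_ab - 2 * hshift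

theorem thirty_mul_sum_filter_eq_eq_sigmaFn_sub (n : ℕ) :
    30 * ∑ p ∈ twoProductReps n with p.1.2 = p.2.2,
        ((p.1.1 : ℤ) * p.2.1 * (p.1.1 + p.2.1)) ^ 2 = (sigmaFn 7 n : ℤ) - sigmaFn 3 n := by
  rw [twoProductReps.sum_filter_eq_eq_sum_divisorsAntidiagonal n
    (fun a b => ((a : ℤ) * b * (a + b)) ^ 2), mul_sum]
  have hinner : ∀ q ∈ n.divisorsAntidiagonal,
      30 * ∑ a ∈ Ico 1 q.2, ((a : ℤ) * ↑(q.2 - a) * (a + ↑(q.2 - a))) ^ 2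
        = (q.2 : ℤ) ^ 7 - (q.2 : ℤ) ^ 3 := by
    rintro ⟨x, e⟩ -
    have hterm : ∀ a ∈ Ico 1 e, ((a : ℤ) * ↑(e - a) * (a + ↑(e - a))) ^ 2
        = (e : ℤ) ^ 2 * ((a : ℤ) ^ 2 * (e - a) ^ 2) := fun a ha => by
      rw [Nat.cast_sub (mem_Ico.1 ha).2.le]; ring
    rw [sum_congr rfl hterm, ← mul_sum]
    linear_combination (e : ℤ) ^ 2 * sum_Ico_sq_mul_sub_sq (R := ℤ) e
  rw [sum_congr rfl hinner, sum_sub_distrib, sigmaFn, sigmaFn,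
    Nat.sum_divisorsAntidiagonal' (fun _ e => (e : ℤ) ^ 7),
    Nat.sum_divisorsAntidiagonal' (fun _ e => (e : ℤ) ^ 3)]
  push_cast
  rfl

theorem sigma_seven_eq_general (n : ℕ) :
    sigmaFn 7 n = sigmaFn 3 n + 120 * ∑ i ∈ Finset.Ico 1 n, sigmaFn 3 i * sigmaFn 3 (n - i) := by
  have key : (sigmaFn 7 n : ℤ)
      = sigmaFn 3 n + 120 * ∑ p ∈ twoProductReps n, ((p.1.1 : ℤ) * p.2.1) ^ 3 := by
    linear_combination -thirty_mul_sum_filter_eq_eq_sigmaFn_sub n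
      - 30 * four_mul_sum_cube_eq_sum_filter_eq n
  rw [sum_sigmaFn_mul_sigmaFn_eq_sum_twoProductReps]
  simp only [← mul_pow]
  exact_mod_cast key

/-- For every positive integer `n`,
`σ₇(n) = σ₃(n) + 120 Σ_{i=1}^{n−1} σ₃(i) σ₃(n−i)`. -/
theorem sigma_seven_eq (n : ℕ) (hn : 0 < n) :
    sigmaFn 7 n = sigmaFn 3 n + 120 * ∑ i ∈ Finset.Ico 1 n, sigmaFn 3 i * sigmaFn 3 (n - i) :=
  sigma_seven_eq_general n
end

section
/- The Weierstrass curve Y² + XY = X³ + a₄(q) X + a₆(q) over the ring ℤ((q)) of formal Laurent series with integer coefficients is an elliptic curve, i.e. its discriminant q Π_{n≥1}(1−qⁿ)²⁴ is a unit of ℤ((q)). -/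
/-! The discriminant of the Tate curve lies in `ℤ⟦q⟧`, where it is `q` times a power series
with constant coefficient `-1`: since `q` divides `a₄` and `a₆`, only the term `-a₆` of
`Δ = -a₆ + a₄² + 72 a₄ a₆ - 64 a₄³ - 432 a₆²` contributes to the coefficient of `q`, and the
coefficient of `q` in `a₆` is `-(5 + 7) / 12 = -1`. As `q` is invertible in `ℤ((q))`, so is `Δ`. -/

noncomputable section

/-- `a₄(q) = −5 Σ_{n≥1} σ₃(n) qⁿ`, a power series with integer coefficients,
regarded as an element of `ℤ((q))`. -/
def a4Tate : LaurentSeries ℤ :=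
  HahnSeries.ofPowerSeries ℤ ℤ (PowerSeries.mk fun n => -5 * (sigmaFn 3 n : ℤ))

/-- `a₆(q) = −Σ_{n≥1} ((5σ₃(n) + 7σ₅(n))/12) qⁿ`, a power series with integer
coefficients (`12 ∣ 5σ₃(n) + 7σ₅(n)`), regarded as an element of `ℤ((q))`. -/
def a6Tate : LaurentSeries ℤ :=
  HahnSeries.ofPowerSeries ℤ ℤ
    (PowerSeries.mk fun n => -(((5 * sigmaFn 3 n + 7 * sigmaFn 5 n) / 12 : ℕ) : ℤ))

/-- The Tate curve `Y² + XY = X³ + a₄(q)X + a₆(q)` as a Weierstrass curve over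
the Laurent series ring `ℤ((q))`. -/
def tateCurve : WeierstrassCurve (LaurentSeries ℤ) :=
  { a₁ := 1, a₂ := 0, a₃ := 0, a₄ := a4Tate, a₆ := a6Tate }

open PowerSeries

namespace LaurentSeries

variable {R : Type*} [CommRing R]

lemma isUnit_ofPowerSeries_X : IsUnit (HahnSeries.ofPowerSeries ℤ R X) := by
  rw [HahnSeries.ofPowerSeries_X]
  refine .of_mul_eq_one (HahnSeries.single (-1) 1) ?_
  rw [HahnSeries.single_mul_single, add_neg_cancel, mul_one, HahnSeries.single_zero_one]

lemma isUnit_ofPowerSeries_X_mul {f : R⟦X⟧} (hf : IsUnit (constantCoeff f)) :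
    IsUnit (HahnSeries.ofPowerSeries ℤ R (X * f)) := by
  rw [map_mul]
  exact isUnit_ofPowerSeries_X.mul ((isUnit_iff_constantCoeff.mpr hf).map _)

end LaurentSeries

namespace WeierstrassCurve

variable {R : Type*} [CommRing R]

lemma Δ_of_a₁_eq_one_of_a₂_eq_zero_of_a₃_eq_zero {W : WeierstrassCurve R} (h₁ : W.a₁ = 1)
    (h₂ : W.a₂ = 0) (h₃ : W.a₃ = 0) :
    W.Δ = -W.a₆ + W.a₄ ^ 2 + 72 * W.a₄ * W.a₆ - 64 * W.a₄ ^ 3 - 432 * W.a₆ ^ 2 := by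
  simp only [Δ, b₂, b₄, b₆, b₈, h₁, h₂, h₃]
  ring

lemma exists_Δ_eq_X_mul {W : WeierstrassCurve R⟦X⟧} (h₁ : W.a₁ = 1) (h₂ : W.a₂ = 0)
    (h₃ : W.a₃ = 0) (h₄ : constantCoeff W.a₄ = 0) (h₆ : constantCoeff W.a₆ = 0) :
    ∃ Q : R⟦X⟧, W.Δ = X * Q ∧ constantCoeff Q = -coeff 1 W.a₆ := by
  obtain ⟨A, hA⟩ := X_dvd_iff.mpr h₄
  obtain ⟨B, hB⟩ := X_dvd_iff.mpr h₆
  refine ⟨-B + X * (A ^ 2 + 72 * A * B - 64 * X * A ^ 3 - 432 * B ^ 2), ?_, ?_⟩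
  · rw [Δ_of_a₁_eq_one_of_a₂_eq_zero_of_a₃_eq_zero h₁ h₂ h₃, hA, hB]
    ring
  · simp [hB, coeff_succ_X_mul]

end WeierstrassCurve

def tateCurvePowerSeries : WeierstrassCurve ℤ⟦X⟧ :=
  { a₁ := 1, a₂ := 0, a₃ := 0,
    a₄ := mk fun n => -5 * (sigmaFn 3 n : ℤ),
    a₆ := mk fun n => -(((5 * sigmaFn 3 n + 7 * sigmaFn 5 n) / 12 : ℕ) : ℤ) }

lemma tateCurve_eq_map :
    tateCurve = tateCurvePowerSeries.map (HahnSeries.ofPowerSeries ℤ ℤ) := by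
  simp [tateCurve, tateCurvePowerSeries, WeierstrassCurve.map, a4Tate, a6Tate]

lemma coeff_one_tateCurvePowerSeries_a₆ : coeff 1 tateCurvePowerSeries.a₆ = -1 := by
  simp [tateCurvePowerSeries, sigmaFn]

/-- The Tate curve over `ℤ((q))` is an elliptic curve: its discriminant
(namely `q Π_{n≥1}(1−qⁿ)²⁴`) is a unit of `ℤ((q))`. -/
theorem tateCurve_isUnit_disc : IsUnit tateCurve.Δ := by
  obtain ⟨Q, hΔ, hQ⟩ := tateCurvePowerSeries.exists_Δ_eq_X_mul rfl rfl rfl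
    (by simp [tateCurvePowerSeries, sigmaFn]) (by simp [tateCurvePowerSeries, sigmaFn])
  rw [tateCurve_eq_map, WeierstrassCurve.map_Δ, hΔ]
  apply LaurentSeries.isUnit_ofPowerSeries_X_mul
  rw [hQ, coeff_one_tateCurvePowerSeries_a₆, neg_neg]
  exact isUnit_one
end
end
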